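/- arXiv:math/0409181 — 4 statements merged into one kernel-verified Lean document; each statement's English description precedes it below -/
import Mathlib

section
/- Let u(x) = c·exp(iρx) be an eigenfunction and v(x) = d·exp(iρ̄(x−1)) its biorthogonal function with (u,v)_{L²(0,1)} = c·d̄·exp(iρ) = 1, where Im ρ ≥ 0. Then the rank-one projector P(f) = (f,v)·u on L²(0,1) has norm ‖P‖ = |c|·|d|·‖exp(iρ·)‖·‖exp(iρ̄(·−1))‖, and this norm satisfies the two-sided estimate ‖P‖ ≍ exp(Im ρ)/(1+Im ρ) with absolute constants. -/
open Complex MeasureTheory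

/-! Since `‖(innerSL v).smulRight u‖ = ‖v‖ ‖u‖`, everything reduces to computing `‖u‖` and `‖v‖`.
With `t = Im ρ`, `|u(x)|² = |c|² e^{-2tx}` and `|v(x)|² = |d|² e^{2t(x-1)}`, and the reflection
`x ↦ 1 - x` makes both norms squared multiples of `J = ∫₀¹ e^{-2tx} dx = (1 - e^{-2t})/(2t)`.
The normalisation `(u,v) = 1` forces `|c||d| = e^t`, so `‖P‖ = e^t J`, and
`1/(1+s) ≤ ∫₀¹ e^{-sx} dx ≤ 2/(1+s)` (from `1 + s ≤ e^s`) gives the two-sided estimate. -/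

lemma norm_toLp_sq_eq_integral {α E : Type*} [MeasurableSpace α] {μ : Measure α}
    [NormedAddCommGroup E] {f : α → E} (hf : MemLp f 2 μ) :
    ‖hf.toLp f‖ ^ 2 = ∫ a, ‖f a‖ ^ 2 ∂μ := by
  rw [Lp.norm_toLp, hf.eLpNorm_eq_integral_rpow_norm two_ne_zero ENNReal.ofNat_ne_top,
    ENNReal.toReal_ofReal (by positivity), ← Real.rpow_natCast, ← Real.rpow_mul (by positivity)]
  norm_num

lemma setIntegral_Ioo_eq_intervalIntegral {E : Type*} [NormedAddCommGroup E] [NormedSpace ℝ E]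
    (f : ℝ → E) {a b : ℝ} (hab : a ≤ b) :
    ∫ x in Set.Ioo a b, f x = ∫ x in a..b, f x := by
  rw [intervalIntegral.integral_of_le hab, integral_Ioc_eq_integral_Ioo]

lemma integral_exp_neg_mul (s : ℝ) (hs : s ≠ 0) :
    ∫ x in (0:ℝ)..1, Real.exp (-s * x) = (1 - Real.exp (-s)) / s := by
  rw [intervalIntegral.integral_comp_mul_left Real.exp (neg_ne_zero.2 hs), integral_exp]
  simp only [mul_zero, mul_one, Real.exp_zero, smul_eq_mul]
  field_simp
  ring

lemma integral_exp_mul_sub_one (s : ℝ) :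
    ∫ x in (0:ℝ)..1, Real.exp (s * (x - 1)) = ∫ x in (0:ℝ)..1, Real.exp (-s * x) := by
  have hreflect :=
    intervalIntegral.integral_comp_sub_left (fun x => Real.exp (-s * x)) (a := 0) (b := 1) 1
  simp only [sub_self, sub_zero] at hreflect
  rw [← hreflect]
  congr 1 with x
  ring_nf

lemma inv_one_add_le_integral_exp_neg_mul {s : ℝ} (hs : 0 ≤ s) :
    1 / (1 + s) ≤ ∫ x in (0:ℝ)..1, Real.exp (-s * x) := by
  rcases hs.eq_or_lt with rfl | hs
  · simp
  rw [integral_exp_neg_mul s hs.ne', div_le_div_iff₀ (by positivity) hs]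
  have h : (1 + s) * Real.exp (-s) ≤ 1 := by
    calc (1 + s) * Real.exp (-s) ≤ Real.exp s * Real.exp (-s) := by
          gcongr; linarith [Real.add_one_le_exp s]
      _ = 1 := by rw [← Real.exp_add, add_neg_cancel, Real.exp_zero]
  nlinarith

lemma integral_exp_neg_mul_le {s : ℝ} (hs : 0 ≤ s) :
    ∫ x in (0:ℝ)..1, Real.exp (-s * x) ≤ 2 / (1 + s) := by
  rcases hs.eq_or_lt with rfl | hs
  · norm_num
  rw [integral_exp_neg_mul s hs.ne', div_le_div_iff₀ hs (by positivity)]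
  have h1 : 1 - s ≤ Real.exp (-s) := by linarith [Real.add_one_le_exp (-s)]
  have h2 : 0 < Real.exp (-s) := Real.exp_pos _
  rcases le_total s 1 with h | h <;> nlinarith

lemma norm_mul_exp_sq (c z : ℂ) : ‖c * cexp z‖ ^ 2 = ‖c‖ ^ 2 * Real.exp (2 * z.re) := by
  rw [norm_mul, mul_pow, norm_exp, ← Real.exp_nat_mul, Nat.cast_ofNat]

section
variable {ρ : ℂ}

lemma norm_toLp_exp_sq (c : ℂ) (hu : MemLp (fun x : ℝ => c * cexp (I * ρ * x)) 2
      (volume.restrict (Set.Ioo (0:ℝ) 1))) :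
    ‖hu.toLp _‖ ^ 2 = ‖c‖ ^ 2 * ∫ x in (0:ℝ)..1, Real.exp (-(2 * ρ.im) * x) := by
  rw [norm_toLp_sq_eq_integral, ← intervalIntegral.integral_const_mul,
    ← setIntegral_Ioo_eq_intervalIntegral _ zero_le_one]
  simp only [norm_mul_exp_sq]
  congr 2 with x
  congr 2
  simp only [mul_re, mul_im, I_re, I_im, ofReal_re, ofReal_im]
  ring

lemma norm_toLp_exp_conj_sq (d : ℂ) (hv : MemLp (fun x : ℝ =>
      d * cexp (I * (starRingEnd ℂ) ρ * (x - 1))) 2 (volume.restrict (Set.Ioo (0:ℝ) 1))) :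
    ‖hv.toLp _‖ ^ 2 = ‖d‖ ^ 2 * ∫ x in (0:ℝ)..1, Real.exp (-(2 * ρ.im) * x) := by
  rw [norm_toLp_sq_eq_integral, ← integral_exp_mul_sub_one, ← intervalIntegral.integral_const_mul,
    ← setIntegral_Ioo_eq_intervalIntegral _ zero_le_one]
  simp only [norm_mul_exp_sq]
  congr 2 with x
  congr 2
  simp only [mul_re, mul_im, I_re, I_im, conj_re, conj_im, sub_re, sub_im, ofReal_re, ofReal_im,
    one_re, one_im]
  ring

lemma norm_mul_norm_eq_exp_im {c d : ℂ} (h : c * (starRingEnd ℂ) d * cexp (I * ρ) = 1) :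
    ‖c‖ * ‖d‖ = Real.exp ρ.im := by
  have h' := congrArg norm h
  rw [norm_mul, norm_mul, RCLike.norm_conj, norm_exp, norm_one, mul_re, I_re, I_im] at h'
  simp only [zero_mul, one_mul, zero_sub, Real.exp_neg] at h'
  exact (mul_inv_eq_one₀ (Real.exp_pos _).ne').1 h'

end

/-- For `u(x) = c·exp(iρx)`, `v(x) = d·exp(iρ̄(x−1))` in L²(0,1) with
`(u,v) = c·d̄·exp(iρ) = 1` and `Im ρ ≥ 0`, the rank-one projector `P f = (f,v)·u`
has norm `‖P‖ = ‖u‖·‖v‖ ( = |c|·|d|·‖exp(iρ·)‖·‖exp(iρ̄(·−1))‖ )`, and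
`‖P‖ ≍ exp(Im ρ)/(1+Im ρ)` with absolute constants. -/
theorem stmt5 :
    ∃ C₁ C₂ : ℝ, 0 < C₁ ∧ 0 < C₂ ∧
      ∀ (ρ c d : ℂ), 0 ≤ ρ.im → c ≠ 0 → d ≠ 0 →
        c * (starRingEnd ℂ) d * Complex.exp (Complex.I * ρ) = 1 →
        ∀ (hu : MemLp (fun x : ℝ => c * Complex.exp (Complex.I * ρ * x)) 2
              (volume.restrict (Set.Ioo (0:ℝ) 1)))
          (hv : MemLp (fun x : ℝ =>
                d * Complex.exp (Complex.I * ((starRingEnd ℂ) ρ) * (x - 1))) 2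
              (volume.restrict (Set.Ioo (0:ℝ) 1))),
        let u := hu.toLp _
        let v := hv.toLp _
        let P := (innerSL ℂ v).smulRight u
        ‖P‖ = ‖u‖ * ‖v‖ ∧
          C₁ * Real.exp ρ.im / (1 + ρ.im) ≤ ‖P‖ ∧
          ‖P‖ ≤ C₂ * Real.exp ρ.im / (1 + ρ.im) := by
  refine ⟨1 / 2, 2, by norm_num, by norm_num, ?_⟩
  intro ρ c d ht _ _ hcd hu hv u v P
  set J := ∫ x in (0:ℝ)..1, Real.exp (-(2 * ρ.im) * x)
  have hlo : 1 / (1 + 2 * ρ.im) ≤ J := inv_one_add_le_integral_exp_neg_mul (by positivity)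
  have hhi : J ≤ 2 / (1 + 2 * ρ.im) := integral_exp_neg_mul_le (by positivity)
  have hP : ‖P‖ = ‖u‖ * ‖v‖ := by
    rw [ContinuousLinearMap.norm_smulRight_apply, innerSL_apply_norm, mul_comm]
  have huv : ‖u‖ * ‖v‖ = Real.exp ρ.im * J := by
    refine (sq_eq_sq₀ (by positivity) (mul_nonneg (Real.exp_pos _).le
      (le_trans (by positivity) hlo))).1 ?_
    rw [mul_pow, norm_toLp_exp_sq, norm_toLp_exp_conj_sq, ← norm_mul_norm_eq_exp_im hcd]
    ring
  refine ⟨hP, ?_, ?_⟩ <;> rw [hP, huv]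
  · calc 1 / 2 * Real.exp ρ.im / (1 + ρ.im) = Real.exp ρ.im * (1 / (2 + 2 * ρ.im)) := by
          field_simp
      _ ≤ Real.exp ρ.im * (1 / (1 + 2 * ρ.im)) := by gcongr; linarith
      _ ≤ Real.exp ρ.im * J := by gcongr
  · calc Real.exp ρ.im * J ≤ Real.exp ρ.im * (2 / (1 + 2 * ρ.im)) := by gcongr
      _ ≤ Real.exp ρ.im * (2 / (1 + ρ.im)) := by gcongr; linarith
      _ = 2 * Real.exp ρ.im / (1 + ρ.im) := by ring
end

section
/- Let Q⁰ and Q¹ be n×n complex matrices whose rows (grouped into blocks of sizes r₀,…,r_{n−1} with ∑ r_j = n) are given by Q^i having block-column entries B_k^i = (b_j^i · ε_k^j)_{j=0}^{n−1}, where b_j^i are r_j×1 vectors, and suppose for every j the r_j×2 matrix (b_j^0 b_j^1) has rank r_j (with 0 ≤ r_j ≤ 2). Then the n×2n matrix Q = [Q⁰ Q¹] has full rank n. -/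
open Complex Matrix Finset

/-!
Write `ε k = exp (2πik/n)`. A vanishing combination `∑ c_{j,s} · row_{j,s}` of rows of `Q` says,
column by column, that for each `i` the coefficients `a_{i,j} = ∑_s c_{j,s} b_j^i(s)` satisfy
`∑_j a_{i,j} ε_k^j = 0` for all `k`. The `ε_k` are distinct, so the Vandermonde matrix `(ε_k^j)` is
invertible and all `a_{i,j}` vanish; since `(b_j^0 b_j^1)` has rank `r_j`, its rows are independent
and all `c_{j,s}` vanish.
-/

theorem Matrix.linearIndependent_row_of_rank_eq_card {K m n : Type*} [Field K] [Fintype m]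
    [Fintype n] {A : Matrix m n K} (h : A.rank = Fintype.card m) : LinearIndependent K A.row := by
  rw [linearIndependent_iff_card_eq_finrank_span, Set.finrank, ← rank_eq_finrank_span_row, h]

theorem Complex.injective_exp_two_pi_I_mul_div (n : ℕ) :
    Function.Injective fun k : Fin n => exp (2 * Real.pi * I * (k : ℕ) / n) := by
  rcases Nat.eq_zero_or_pos n with rfl | hn
  · exact fun k => k.elim0
  have hζ := isPrimitiveRoot_exp n hn.ne'
  have hpow (k : ℕ) : exp (2 * Real.pi * I * k / n) = exp (2 * Real.pi * I / n) ^ k := by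
    rw [← exp_nat_mul]
    ring_nf
  intro k l hkl
  simp only [hpow] at hkl
  exact Fin.ext (hζ.pow_inj k.is_lt l.is_lt hkl)

theorem linearIndependent_sigma_mul_pow {K ι : Type*} [Field K] {n : ℕ} {κ : Fin n → Type*}
    [∀ j, Fintype (κ j)] {b : (j : Fin n) → κ j → ι → K} (hb : ∀ j, LinearIndependent K (b j))
    {x : Fin n → K} (hx : Function.Injective x) :
    LinearIndependent K fun js : (j : Fin n) × κ j =>
      fun ik : ι × Fin n => b js.1 js.2 ik.1 * x ik.2 ^ (js.1 : ℕ) := by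
  rw [Fintype.linearIndependent_iff]
  rintro c hc ⟨j, s⟩
  have hcoeff (i : ι) : (fun j => ∑ s, c ⟨j, s⟩ * b j s i) = 0 := by
    refine eq_zero_of_forall_index_sum_mul_pow_eq_zero hx fun k => ?_
    have := congrFun hc (i, k)
    simp only [Finset.sum_apply, Pi.smul_apply, smul_eq_mul, Pi.zero_apply] at this
    rw [← this, ← Finset.univ_sigma_univ, Finset.sum_sigma]
    simp only [Finset.sum_mul, mul_assoc]
  have hblock : ∑ s, c ⟨j, s⟩ • b j s = 0 := by
    funext i
    simpa using congrFun (hcoeff i) j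
  exact Fintype.linearIndependent_iff.mp (hb j) _ hblock s

theorem stmt7_general (n : ℕ) (r : Fin n → ℕ)
    (hsum : ∑ j, r j = n)
    (b : (j : Fin n) → Fin 2 → Fin (r j) → ℂ)
    (hrank : ∀ j, (Matrix.of fun (s : Fin (r j)) (i : Fin 2) => b j i s).rank = r j)
    (Q : Matrix ((j : Fin n) × Fin (r j)) (Fin 2 × Fin n) ℂ)
    (hQ : ∀ (js : (j : Fin n) × Fin (r j)) (ik : Fin 2 × Fin n),
      Q js ik = b js.1 ik.1 js.2 *
        Complex.exp (2 * Real.pi * Complex.I * (ik.2 : ℕ) / n) ^ (js.1 : ℕ)) :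
    Q.rank = n := by
  have hblock (j : Fin n) : LinearIndependent ℂ fun s (i : Fin 2) => b j i s :=
    linearIndependent_row_of_rank_eq_card ((hrank j).trans (Fintype.card_fin _).symm)
  have hrow : LinearIndependent ℂ Q.row := by
    have := linearIndependent_sigma_mul_pow hblock (injective_exp_two_pi_I_mul_div n)
    rwa [← funext₂ hQ] at this
  rw [hrow.rank_matrix, Fintype.card_sigma]
  simpa using hsum

/-- Block-structured matrix `Q = [Q⁰ Q¹]` with block-column entries
`B_k^i = (b_j^i · ε_k^j)_j`, where each `(b_j^0 b_j^1)` is an `r_j × 2` matrix of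
rank `r_j` (`0 ≤ r_j ≤ 2`, `∑ r_j = n`), has full rank n. -/
theorem stmt7 (n : ℕ) (hn : 0 < n) (r : Fin n → ℕ) (hr2 : ∀ j, r j ≤ 2)
    (hsum : ∑ j, r j = n)
    (b : (j : Fin n) → Fin 2 → Fin (r j) → ℂ)
    (hrank : ∀ j, (Matrix.of fun (s : Fin (r j)) (i : Fin 2) => b j i s).rank = r j)
    (Q : Matrix ((j : Fin n) × Fin (r j)) (Fin 2 × Fin n) ℂ)
    (hQ : ∀ (js : (j : Fin n) × Fin (r j)) (ik : Fin 2 × Fin n),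
      Q js ik = b js.1 ik.1 js.2 *
        Complex.exp (2 * Real.pi * Complex.I * (ik.2 : ℕ) / n) ^ (js.1 : ℕ)) :
    Q.rank = n :=
  stmt7_general n r hsum b hrank Q hQ
end

section
/- Let n > 2, ε_m = exp(2πim/n), ρ ∈ ℂ with 0 ≤ arg ρ < 2π/n, and ρⱼ ∈ ℂ with 0 ≤ arg ρⱼ < 2π/n. Then |ρ·ε₁ − ρⱼ| ≥ |Im ρ|. -/
open Complex Real

/-! Rotating by `exp (-θ I)` preserves distances and turns `ρ exp (θ I) - ρⱼ` into `ρ - w` with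
`w = ρⱼ exp (-θ I)`. Since `0 ≤ arg ρⱼ ≤ θ ≤ π`, the point `w` lies in the closed lower half-plane,
while `ρ` lies in the closed upper one, so `‖ρ - w‖ ≥ Im ρ - Im w ≥ Im ρ`. -/

namespace Complex

lemma im_mul_exp_neg_mul_I_nonpos {z : ℂ} {θ : ℝ} (h0 : 0 ≤ z.arg) (hθ : z.arg ≤ θ)
    (hπ : θ ≤ π) : (z * exp (-(θ * I))).im ≤ 0 := by
  have hrot : z * exp (-(θ * I)) = ‖z‖ * exp ((z.arg - θ : ℝ) * I) := by
    conv_lhs => rw [← norm_mul_exp_arg_mul_I z]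
    rw [mul_assoc, ← exp_add]
    push_cast
    ring_nf
  rw [hrot, im_ofReal_mul, exp_ofReal_mul_I_im]
  exact mul_nonpos_of_nonneg_of_nonpos (norm_nonneg z)
    (Real.sin_nonpos_of_nonpos_of_neg_pi_le (by linarith) (by linarith))

lemma norm_mul_exp_mul_I_sub (a b : ℂ) (θ : ℝ) :
    ‖a * exp (θ * I) - b‖ = ‖a - b * exp (-(θ * I))‖ := by
  have hfactor : a * exp (θ * I) - b = (a - b * exp (-(θ * I))) * exp (θ * I) := by
    rw [sub_mul, mul_assoc b, ← exp_add, neg_add_cancel, exp_zero, mul_one]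
  rw [hfactor, norm_mul, norm_exp_ofReal_mul_I, mul_one]

lemma im_le_norm_sub_of_im_nonpos {a b : ℂ} (hb : b.im ≤ 0) : a.im ≤ ‖a - b‖ :=
  calc a.im ≤ (a - b).im := by rw [sub_im]; linarith
    _ ≤ ‖a - b‖ := im_le_norm _

lemma abs_im_le_norm_mul_exp_mul_I_sub {ρ ρj : ℂ} {θ : ℝ} (hρ : 0 ≤ ρ.arg) (hρj : 0 ≤ ρj.arg)
    (hρjθ : ρj.arg ≤ θ) (hπ : θ ≤ π) : |ρ.im| ≤ ‖ρ * exp (θ * I) - ρj‖ := by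
  rw [abs_of_nonneg (arg_nonneg_iff.mp hρ), norm_mul_exp_mul_I_sub]
  exact im_le_norm_sub_of_im_nonpos (im_mul_exp_neg_mul_I_nonpos hρj hρjθ hπ)

end Complex

theorem stmt11_general (n : ℕ) (hn : 2 < n) (ρ ρj : ℂ)
    (hρ1 : 0 ≤ ρ.arg)
    (hρj1 : 0 ≤ ρj.arg) (hρj2 : ρj.arg < 2 * Real.pi / n) :
    |ρ.im| ≤ ‖ρ * Complex.exp (2 * Real.pi * Complex.I / n) - ρj‖ := by
  have hangle : 2 * π / n ≤ π := by
    rw [div_le_iff₀ (by positivity)]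
    have h2 : (2 : ℝ) ≤ n := by exact_mod_cast hn.le
    nlinarith [mul_le_mul_of_nonneg_left h2 pi_pos.le]
  have hexp : 2 * (π : ℂ) * I / n = ((2 * π / n : ℝ) : ℂ) * I := by
    push_cast
    ring
  rw [hexp]
  exact abs_im_le_norm_mul_exp_mul_I_sub hρ1 hρj1 hρj2.le hangle

/-- For `n > 2`, `ε₁ = exp(2πi/n)` and `ρ, ρⱼ` both in the sector
`{0 ≤ arg z < 2π/n}`, one has `|ρ·ε₁ − ρⱼ| ≥ |Im ρ|`. -/
theorem stmt11 (n : ℕ) (hn : 2 < n) (ρ ρj : ℂ)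
    (hρ1 : 0 ≤ ρ.arg) (hρ2 : ρ.arg < 2 * Real.pi / n)
    (hρj1 : 0 ≤ ρj.arg) (hρj2 : ρj.arg < 2 * Real.pi / n) :
    |ρ.im| ≤ ‖ρ * Complex.exp (2 * Real.pi * Complex.I / n) - ρj‖ :=
  stmt11_general n hn ρ ρj hρ1 hρj1 hρj2
end

section
/- Let P be the integral operator on L²(0,1) with kernel P(x,ξ) = ∑_{t,k=0}^{n−1} a_{tk}·z_k(x)·u_t(ξ), where (z_k) and (u_t) are families in L²(0,1), each almost orthogonal with constants independent of the parameter, and with ‖z_k‖² ≍ ‖u_t‖² ≍ 1/|ρ| for a parameter ρ with |ρ| ≥ R₀. Then ‖P‖ ≍ (1/|ρ|)·(∑_{t,k} |a_{tk}|²)^{1/2}, with constants independent of ρ and of the coefficients a_{tk}. -/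
/-!
Write `P f = ∑_k d_k z_k` with `d_k = ∑_t a_{tk} ⟪u_t, f⟫`; almost orthogonality of `z` gives
`‖P f‖² ≍ |ρ|⁻¹ ∑_k |d_k|²`. For the upper bound, Cauchy–Schwarz and the Bessel inequality for
the almost orthogonal family `u` give `∑_k |d_k|² ≲ |ρ|⁻¹ (∑_{t,k} |a_{tk}|²) ‖f‖²`. For the lower
bound, test `P` on the vectors `f = u_s` and sum over `s`: `(d_k(u_s))_s` is the Gram matrix of `u`
applied to the conjugated `k`-th column of `a`, and almost orthogonality bounds it below by
`(c₃ k₁ / |ρ|)² ∑_t |a_{tk}|²`. Summing over `s` costs the factor `n` in `C₁`.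
-/

open MeasureTheory Finset
open scoped InnerProductSpace ComplexConjugate

lemma ContinuousLinearMap.opNorm_sq_le_of_forall {𝕜 E F : Type*} [NontriviallyNormedField 𝕜]
    [NormedAddCommGroup E] [NormedAddCommGroup F] [NormedSpace 𝕜 E] [NormedSpace 𝕜 F]
    {T : E →L[𝕜] F} {M : ℝ} (hM : 0 ≤ M) (hT : ∀ x, ‖T x‖ ^ 2 ≤ M * ‖x‖ ^ 2) : ‖T‖ ^ 2 ≤ M := by
  refine (Real.le_sqrt (norm_nonneg _) hM).1 (T.opNorm_le_bound (Real.sqrt_nonneg M) fun x => ?_)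
  rw [← Real.sqrt_sq (norm_nonneg x), ← Real.sqrt_mul hM]
  exact (Real.le_sqrt (norm_nonneg _) (by positivity)).2 (by simpa using hT x)

section AlmostOrthogonal

variable {𝕜 ι κ : Type*} [RCLike 𝕜] [Fintype ι] [Fintype κ]

lemma norm_sum_mul_sq_le (b x : ι → 𝕜) :
    ‖∑ t, b t * x t‖ ^ 2 ≤ (∑ t, ‖b t‖ ^ 2) * ∑ t, ‖x t‖ ^ 2 :=
  calc ‖∑ t, b t * x t‖ ^ 2 ≤ (∑ t, ‖b t‖ * ‖x t‖) ^ 2 := by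
        gcongr
        exact (norm_sum_le _ _).trans_eq (by simp_rw [norm_mul])
    _ ≤ _ := sum_mul_sq_le_sq_mul_sq _ _ _

lemma sum_norm_sum_mul_sq_le (a : ι → κ → 𝕜) (x : ι → 𝕜) :
    ∑ k, ‖∑ t, a t k * x t‖ ^ 2 ≤ (∑ t, ∑ k, ‖a t k‖ ^ 2) * ∑ t, ‖x t‖ ^ 2 := by
  rw [sum_comm, sum_mul]
  exact sum_le_sum fun k _ => norm_sum_mul_sq_le _ _

lemma sum_norm_sq_mul_le {E : Type*} [SeminormedAddCommGroup E] {u : ι → E} {B : ℝ}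
    (huB : ∀ t, ‖u t‖ ^ 2 ≤ B) (c : ι → 𝕜) :
    ∑ t, ‖c t‖ ^ 2 * ‖u t‖ ^ 2 ≤ B * ∑ t, ‖c t‖ ^ 2 := by
  rw [mul_sum]
  exact sum_le_sum fun t _ => by rw [mul_comm B]; gcongr; exact huB t

lemma le_sum_norm_sq_mul {E : Type*} [SeminormedAddCommGroup E] {u : ι → E} {B : ℝ}
    (huB : ∀ t, B ≤ ‖u t‖ ^ 2) (c : ι → 𝕜) :
    B * ∑ t, ‖c t‖ ^ 2 ≤ ∑ t, ‖c t‖ ^ 2 * ‖u t‖ ^ 2 := by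
  rw [mul_sum]
  exact sum_le_sum fun t _ => by rw [mul_comm B]; gcongr; exact huB t

variable {H : Type*} [NormedAddCommGroup H] [InnerProductSpace 𝕜 H]

lemma sum_norm_inner_sq_le {u : ι → H} {C B : ℝ} (hC : 0 ≤ C) (hB : 0 ≤ B)
    (hu : ∀ c : ι → 𝕜, ‖∑ t, c t • u t‖ ^ 2 ≤ C * ∑ t, ‖c t‖ ^ 2 * ‖u t‖ ^ 2)
    (huB : ∀ t, ‖u t‖ ^ 2 ≤ B) (f : H) :
    ∑ t, ‖⟪u t, f⟫_𝕜‖ ^ 2 ≤ C * B * ‖f‖ ^ 2 := by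
  set S := ∑ t, ‖⟪u t, f⟫_𝕜‖ ^ 2
  set g := ∑ t, ⟪u t, f⟫_𝕜 • u t
  have hS : 0 ≤ S := by positivity
  have hgf : ⟪g, f⟫_𝕜 = S := by
    simp only [g, S, sum_inner, inner_smul_left, RCLike.conj_mul]
    push_cast
    rfl
  have hSg : S ≤ ‖g‖ * ‖f‖ := by
    have := norm_inner_le_norm (𝕜 := 𝕜) g f
    rwa [hgf, RCLike.norm_ofReal, abs_of_nonneg hS] at this
  have hg : ‖g‖ ^ 2 ≤ C * B * S := by
    rw [mul_assoc]
    exact (hu _).trans (by gcongr; exact sum_norm_sq_mul_le huB _)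
  have hSS : S * S ≤ C * B * ‖f‖ ^ 2 * S :=
    calc S * S ≤ (‖g‖ * ‖f‖) * (‖g‖ * ‖f‖) := mul_self_le_mul_self hS hSg
      _ = ‖g‖ ^ 2 * ‖f‖ ^ 2 := by ring
      _ ≤ C * B * S * ‖f‖ ^ 2 := by gcongr
      _ = C * B * ‖f‖ ^ 2 * S := by ring
  rcases hS.eq_or_lt with h | h
  · rw [← h]; positivity
  · exact le_of_mul_le_mul_right hSS h

lemma sum_norm_sq_le_sum_norm_inner_sq {u : ι → H} {c B : ℝ} (hc : 0 ≤ c) (hB : 0 ≤ B)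
    (hu : ∀ w : ι → 𝕜, c * ∑ t, ‖w t‖ ^ 2 * ‖u t‖ ^ 2 ≤ ‖∑ t, w t • u t‖ ^ 2)
    (huB : ∀ t, B ≤ ‖u t‖ ^ 2) (w : ι → 𝕜) :
    (c * B) ^ 2 * ∑ t, ‖w t‖ ^ 2 ≤ ∑ s, ‖⟪∑ t, w t • u t, u s⟫_𝕜‖ ^ 2 := by
  set g := ∑ t, w t • u t
  set q := ∑ t, ‖w t‖ ^ 2
  set T := ∑ s, ‖⟪g, u s⟫_𝕜‖ ^ 2
  have hlow : c * B * q ≤ ‖g‖ ^ 2 := by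
    calc c * B * q ≤ c * ∑ t, ‖w t‖ ^ 2 * ‖u t‖ ^ 2 := by
          rw [mul_assoc]; gcongr; exact le_sum_norm_sq_mul huB _
      _ ≤ ‖g‖ ^ 2 := hu w
  have hself : ‖g‖ ^ 2 = ‖∑ t, w t * ⟪g, u t⟫_𝕜‖ := by
    have : ⟪g, g⟫_𝕜 = ∑ t, w t * ⟪g, u t⟫_𝕜 := by
      show ⟪g, ∑ t, w t • u t⟫_𝕜 = _
      simp only [inner_sum, inner_smul_right]
    rw [← this, inner_self_eq_norm_sq_to_K, norm_pow, RCLike.norm_ofReal, abs_norm]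
  have hup : (‖g‖ ^ 2) ^ 2 ≤ q * T := hself ▸ norm_sum_mul_sq_le _ _
  have hq : 0 ≤ q := by positivity
  rcases hq.eq_or_lt with h | h
  · rw [← h, mul_zero]; positivity
  · refine le_of_mul_le_mul_right ?_ h
    nlinarith [pow_le_pow_left₀ (by positivity) hlow 2]

noncomputable def rankOneSum (a : ι → κ → 𝕜) (u : ι → H) (z : κ → H) : H →L[𝕜] H :=
  ∑ t, ∑ k, a t k • (innerSL 𝕜 (u t)).smulRight (z k)

lemma rankOneSum_apply (a : ι → κ → 𝕜) (u : ι → H) (z : κ → H) (f : H) :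
    rankOneSum a u z f = ∑ k, (∑ t, a t k * ⟪u t, f⟫_𝕜) • z k := by
  simp only [rankOneSum, _root_.sum_apply, smul_apply, ContinuousLinearMap.smulRight_apply,
    innerSL_apply_apply, sum_smul, smul_smul]
  exact sum_comm

section RankOneSum

variable {a : ι → κ → 𝕜} {u : ι → H} {z : κ → H}

lemma norm_rankOneSum_sq_le {c₂ c₄ Bz Bu : ℝ} (hc₂ : 0 ≤ c₂) (hc₄ : 0 ≤ c₄) (hBz : 0 ≤ Bz)
    (hBu : 0 ≤ Bu)
    (hz : ∀ c : κ → 𝕜, ‖∑ k, c k • z k‖ ^ 2 ≤ c₂ * ∑ k, ‖c k‖ ^ 2 * ‖z k‖ ^ 2)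
    (hu : ∀ c : ι → 𝕜, ‖∑ t, c t • u t‖ ^ 2 ≤ c₄ * ∑ t, ‖c t‖ ^ 2 * ‖u t‖ ^ 2)
    (hzB : ∀ k, ‖z k‖ ^ 2 ≤ Bz) (huB : ∀ t, ‖u t‖ ^ 2 ≤ Bu) :
    ‖rankOneSum a u z‖ ^ 2 ≤ c₂ * c₄ * Bz * Bu * ∑ t, ∑ k, ‖a t k‖ ^ 2 := by
  refine ContinuousLinearMap.opNorm_sq_le_of_forall (by positivity) fun f => ?_
  rw [rankOneSum_apply]
  calc ‖∑ k, (∑ t, a t k * ⟪u t, f⟫_𝕜) • z k‖ ^ 2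
      ≤ c₂ * ∑ k, ‖∑ t, a t k * ⟪u t, f⟫_𝕜‖ ^ 2 * ‖z k‖ ^ 2 := hz _
    _ ≤ c₂ * (Bz * ((∑ t, ∑ k, ‖a t k‖ ^ 2) * ∑ t, ‖⟪u t, f⟫_𝕜‖ ^ 2)) := by
        gcongr
        exact (sum_norm_sq_mul_le hzB _).trans (by gcongr; exact sum_norm_sum_mul_sq_le _ _)
    _ ≤ c₂ * (Bz * ((∑ t, ∑ k, ‖a t k‖ ^ 2) * (c₄ * Bu * ‖f‖ ^ 2))) := by
        gcongr
        exact sum_norm_inner_sq_le hc₄ hBu hu huB f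
    _ = c₂ * c₄ * Bz * Bu * (∑ t, ∑ k, ‖a t k‖ ^ 2) * ‖f‖ ^ 2 := by ring

lemma le_norm_rankOneSum_sq {c₁ c₃ bz bu Bu : ℝ} (hc₁ : 0 ≤ c₁) (hc₃ : 0 ≤ c₃) (hbz : 0 ≤ bz)
    (hbu : 0 ≤ bu)
    (hz : ∀ c : κ → 𝕜, c₁ * ∑ k, ‖c k‖ ^ 2 * ‖z k‖ ^ 2 ≤ ‖∑ k, c k • z k‖ ^ 2)
    (hu : ∀ c : ι → 𝕜, c₃ * ∑ t, ‖c t‖ ^ 2 * ‖u t‖ ^ 2 ≤ ‖∑ t, c t • u t‖ ^ 2)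
    (hzb : ∀ k, bz ≤ ‖z k‖ ^ 2) (hub : ∀ t, bu ≤ ‖u t‖ ^ 2) (huB : ∀ t, ‖u t‖ ^ 2 ≤ Bu) :
    c₁ * bz * (c₃ * bu) ^ 2 * ∑ t, ∑ k, ‖a t k‖ ^ 2
      ≤ Fintype.card ι * Bu * ‖rankOneSum a u z‖ ^ 2 := by
  have hcoef : ∀ k s, ∑ t, a t k * ⟪u t, u s⟫_𝕜 = ⟪∑ t, conj (a t k) • u t, u s⟫_𝕜 := by
    intro k s
    simp only [sum_inner, inner_smul_left, RCLike.conj_conj]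
  calc c₁ * bz * (c₃ * bu) ^ 2 * ∑ t, ∑ k, ‖a t k‖ ^ 2
      = c₁ * bz * ∑ k, (c₃ * bu) ^ 2 * ∑ t, ‖conj (a t k)‖ ^ 2 := by
        simp only [RCLike.norm_conj, ← mul_sum]
        rw [sum_comm]
        ring
    _ ≤ c₁ * bz * ∑ k, ∑ s, ‖∑ t, a t k * ⟪u t, u s⟫_𝕜‖ ^ 2 := by
        gcongr with k
        simp only [hcoef]
        exact sum_norm_sq_le_sum_norm_inner_sq hc₃ hbu hu hub _
    _ = ∑ s, c₁ * (bz * ∑ k, ‖∑ t, a t k * ⟪u t, u s⟫_𝕜‖ ^ 2) := by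
        rw [sum_comm, mul_sum]
        simp only [mul_assoc]
    _ ≤ ∑ s, ‖rankOneSum a u z (u s)‖ ^ 2 := by
        gcongr with s
        rw [rankOneSum_apply]
        refine le_trans ?_ (hz _)
        gcongr
        exact le_sum_norm_sq_mul hzb _
    _ ≤ ∑ s : ι, ‖rankOneSum a u z‖ ^ 2 * Bu := by
        gcongr with s
        calc ‖rankOneSum a u z (u s)‖ ^ 2 ≤ (‖rankOneSum a u z‖ * ‖u s‖) ^ 2 := by
              gcongr; exact (rankOneSum a u z).le_opNorm _
          _ ≤ ‖rankOneSum a u z‖ ^ 2 * Bu := by rw [mul_pow]; gcongr; exact huB s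
    _ = Fintype.card ι * Bu * ‖rankOneSum a u z‖ ^ 2 := by
        rw [sum_const, card_univ, nsmul_eq_mul]
        ring

end RankOneSum

end AlmostOrthogonal

/-- For the finite-rank operator `P f = ∑_{t,k} a_{tk}·(f,u_t)·z_k` on L²(0,1)
(the integral operator with kernel `∑ a_{tk} z_k(x) u_t(ξ)`), where the families
`(z_k)`, `(u_t)` are almost orthogonal with fixed constants and
`‖z_k‖² ≍ ‖u_t‖² ≍ 1/|ρ|` for `|ρ| ≥ R₀`, one has
`‖P‖² ≍ (1/|ρ|²)·∑_{t,k}|a_{tk}|²` with constants independent of ρ and of a. -/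
theorem stmt19 (n : ℕ) (R₀ c₁ c₂ c₃ c₄ k₁ k₂ : ℝ)
    (hR₀ : 0 < R₀) (hc₁ : 0 < c₁) (hc₁₂ : c₁ ≤ c₂) (hc₃ : 0 < c₃) (hc₃₄ : c₃ ≤ c₄)
    (hk₁ : 0 < k₁) (hk₁₂ : k₁ ≤ k₂) :
    ∃ C₁ C₂ : ℝ, 0 < C₁ ∧ 0 < C₂ ∧
      ∀ (ρ : ℂ), R₀ ≤ ‖ρ‖ →
      ∀ (z u : Fin n → Lp ℂ 2 (volume.restrict (Set.Ioo (0:ℝ) 1)))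
        (a : Fin n → Fin n → ℂ),
        (∀ c : Fin n → ℂ,
          c₁ * ∑ k, ‖c k‖ ^ 2 * ‖z k‖ ^ 2 ≤ ‖∑ k, c k • z k‖ ^ 2 ∧
          ‖∑ k, c k • z k‖ ^ 2 ≤ c₂ * ∑ k, ‖c k‖ ^ 2 * ‖z k‖ ^ 2) →
        (∀ c : Fin n → ℂ,
          c₃ * ∑ t, ‖c t‖ ^ 2 * ‖u t‖ ^ 2 ≤ ‖∑ t, c t • u t‖ ^ 2 ∧
          ‖∑ t, c t • u t‖ ^ 2 ≤ c₄ * ∑ t, ‖c t‖ ^ 2 * ‖u t‖ ^ 2) →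
        (∀ k, k₁ / ‖ρ‖ ≤ ‖z k‖ ^ 2 ∧ ‖z k‖ ^ 2 ≤ k₂ / ‖ρ‖) →
        (∀ t, k₁ / ‖ρ‖ ≤ ‖u t‖ ^ 2 ∧ ‖u t‖ ^ 2 ≤ k₂ / ‖ρ‖) →
        let P := ∑ t, ∑ k, a t k • ((innerSL ℂ (u t)).smulRight (z k))
        C₁ * (∑ t, ∑ k, ‖a t k‖ ^ 2) / ‖ρ‖ ^ 2 ≤ ‖P‖ ^ 2 ∧
          ‖P‖ ^ 2 ≤ C₂ * (∑ t, ∑ k, ‖a t k‖ ^ 2) / ‖ρ‖ ^ 2 := by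
  have hc₂ : 0 < c₂ := hc₁.trans_le hc₁₂
  have hc₄ : 0 < c₄ := hc₃.trans_le hc₃₄
  have hk₂ : 0 < k₂ := hk₁.trans_le hk₁₂
  refine ⟨c₁ * c₃ ^ 2 * k₁ ^ 3 / ((n + 1) * k₂), c₂ * c₄ * k₂ ^ 2, by positivity, by positivity,
    fun ρ hρ z u a hz hu hzn hun => ?_⟩
  have hr : 0 < ‖ρ‖ := hR₀.trans_le hρ
  show _ ≤ ‖rankOneSum a u z‖ ^ 2 ∧ ‖rankOneSum a u z‖ ^ 2 ≤ _
  have hlow := le_norm_rankOneSum_sq (a := a) hc₁.le hc₃.le (by positivity) (by positivity)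
    (fun c => (hz c).1) (fun c => (hu c).1) (fun k => (hzn k).1) (fun t => (hun t).1)
    (fun t => (hun t).2)
  have hup := norm_rankOneSum_sq_le (a := a) hc₂.le hc₄.le (by positivity) (by positivity)
    (fun c => (hz c).2) (fun c => (hu c).2) (fun k => (hzn k).2) (fun t => (hun t).2)
  rw [Fintype.card_fin] at hlow
  constructor
  · rw [div_le_iff₀ (by positivity), div_mul_eq_mul_div, div_le_iff₀ (by positivity)]
    field_simp at hlow
    nlinarith [mul_nonneg (mul_nonneg (sq_nonneg ‖rankOneSum a u z‖) (sq_nonneg ‖ρ‖)) hk₂.le]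
  · calc _ ≤ _ := hup
      _ = _ := by field_simp
end
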